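/- arXiv:2307.13420 — 3 statements merged into one kernel-verified Lean document; each statement's English description precedes it below -/
import Mathlib

section
/- Let F : X → Y be a branched function with transfer operator Φ. If (ψ_m)_{m∈ℕ} is a sequence in C₁(X) with ∑_{m} ‖Φ(|ψ_m|)‖_∞ < ∞, then the series ∑_{m} ψ_m converges uniformly on X to a function ψ ∈ C₀(X), and ψ ∈ C₁(X). (In other words, C₁(X) is complete with respect to the norm ‖ψ‖₁ := ‖Φ(|ψ|)‖_∞.) -/
/-!
Since `ind ≥ 1`, `‖ψ x‖ ≤ Φ(|ψ|)(F x)`, so the `C₁`-bounds dominate the sup norms: the series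
converges uniformly, and exchanging sums of nonnegative terms bounds `Φ(|g - S_N|)` by the tail
`∑_{m ≥ N} c m`. As uniform limits of `C₀` functions are `C₀`, it remains to see that the partial
sums `S_N` lie in `C₁`, i.e. that `C₁` is closed under addition. The point is continuity of
`Φ(φ)` for `0 ≤ φ ≤ h` continuous with `Φ(h)` continuous. For continuous `φ ≥ 0`, `Φ(φ)` is
lower semicontinuous: the inverse branches through finitely many points of `F⁻¹(y₀)`, kept apart
by disjoint neighbourhoods, exhibit near `y₀` a partial sum of `Φ(φ)(y)` which is continuous in
`y`, and at `y₀` approximates `Φ(φ)(y₀)`. Applied to `φ` and to `h - φ`, this makes `Φ(φ)` both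
lower and upper semicontinuous.
-/

open Filter Topology

/-- `F` admits a system of inverse branches centered at `x`, relative to the index
function `ind`. -/
def BranchedAt {X Y : Type*} [TopologicalSpace X] [TopologicalSpace Y]
    (F : X → Y) (ind : X → ℕ) (x : X) : Prop :=
  ∃ (U : Set X) (V : Set Y) (g : Fin (ind x) → Y → X),
    IsOpen U ∧ x ∈ U ∧ IsOpen V ∧ F x ∈ V ∧
    (∀ i, ∀ v ∈ V, g i v ∈ U) ∧
    (∀ i, ∀ v ∈ V, F (g i v) = v) ∧
    (∀ i, g i (F x) = x) ∧
    (∀ i, ContinuousWithinAt (g i) V (F x)) ∧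
    (U = ⋃ i, g i '' V) ∧
    (∀ u ∈ U, ind u = Nat.card {i : Fin (ind x) // u ∈ g i '' V})

/-- `F` is a branched function with index function `ind`. -/
def IsBranched {X Y : Type*} [TopologicalSpace X] [TopologicalSpace Y]
    (F : X → Y) (ind : X → ℕ) : Prop :=
  Continuous F ∧ (∀ x, 0 < ind x) ∧ ∀ x, BranchedAt F ind x

/-- The transfer operator applied to `|f|`:
`Φ(|f|)(y) = ∑_{x ∈ F⁻¹(y)} ind_F(x)·|f(x)|`. -/
noncomputable def transferAbs {X Y : Type*} (F : X → Y) (ind : X → ℕ) (f : X → ℂ) (y : Y) : ℝ :=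
  ∑' x : F ⁻¹' {y}, (ind x.1 : ℝ) * ‖f x.1‖

/-- Membership in `C₁(X)`: `ψ ∈ C₀(X)` and `Φ(|ψ|)` is everywhere finite and lies in
`C₀(Y)`. -/
def MemC1 {X Y : Type*} [TopologicalSpace X] [TopologicalSpace Y]
    (F : X → Y) (ind : X → ℕ) (ψ : X → ℂ) : Prop :=
  Continuous ψ ∧ Tendsto ψ (cocompact X) (nhds 0) ∧
  (∀ y : Y, Summable fun x : F ⁻¹' {y} => (ind x.1 : ℝ) * ‖ψ x.1‖) ∧
  Continuous (transferAbs F ind ψ) ∧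
  Tendsto (transferAbs F ind ψ) (cocompact Y) (nhds 0)

open Finset

section Transfer

variable {X Y : Type*}

/-- `transferAbs F ind f` is definitionally `transfer F ind fun x => ‖f x‖`. -/
noncomputable def transfer (F : X → Y) (ind : X → ℕ) (φ : X → ℝ) (y : Y) : ℝ :=
  ∑' x : F ⁻¹' {y}, (ind x.1 : ℝ) * φ x.1

def FiberSummable (F : X → Y) (ind : X → ℕ) (φ : X → ℝ) : Prop :=
  ∀ y, Summable fun x : F ⁻¹' {y} => (ind x.1 : ℝ) * φ x.1

variable {F : X → Y} {ind : X → ℕ}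

theorem transfer_nonneg {φ : X → ℝ} (hφ : 0 ≤ φ) (y : Y) : 0 ≤ transfer F ind φ y :=
  tsum_nonneg fun x => mul_nonneg (Nat.cast_nonneg _) (hφ x)

theorem FiberSummable.of_nonneg_of_le {φ h : X → ℝ} (hh : FiberSummable F ind h) (hφ : 0 ≤ φ)
    (hφh : φ ≤ h) : FiberSummable F ind φ := fun y =>
  (hh y).of_nonneg_of_le (fun x => mul_nonneg (Nat.cast_nonneg _) (hφ x))
    fun x => mul_le_mul_of_nonneg_left (hφh x) (Nat.cast_nonneg _)

theorem FiberSummable.add {φ h : X → ℝ} (hφ : FiberSummable F ind φ)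
    (hh : FiberSummable F ind h) : FiberSummable F ind (φ + h) := fun y => by
  simpa only [Pi.add_apply, mul_add] using (hφ y).add (hh y)

theorem transfer_add {φ h : X → ℝ} (hφ : FiberSummable F ind φ) (hh : FiberSummable F ind h)
    (y : Y) : transfer F ind (φ + h) y = transfer F ind φ y + transfer F ind h y := by
  simp only [transfer, Pi.add_apply, mul_add]
  exact (hφ y).tsum_add (hh y)

theorem transfer_mono {φ h : X → ℝ} (hφ : FiberSummable F ind φ) (hh : FiberSummable F ind h)
    (hφh : φ ≤ h) (y : Y) : transfer F ind φ y ≤ transfer F ind h y :=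
  (hφ y).tsum_le_tsum (fun x => mul_le_mul_of_nonneg_left (hφh x.1) (Nat.cast_nonneg _)) (hh y)

theorem le_transfer_apply {φ : X → ℝ} (hφ : 0 ≤ φ) (hind : 0 < ind x)
    (hs : FiberSummable F ind φ) : φ x ≤ transfer F ind φ (F x) :=
  calc φ x ≤ ind x * φ x := le_mul_of_one_le_left (hφ x) (Nat.one_le_cast.2 hind)
    _ ≤ transfer F ind φ (F x) :=
      (hs (F x)).le_tsum ⟨x, rfl⟩ fun z _ => mul_nonneg (Nat.cast_nonneg _) (hφ z)

theorem sum_le_transfer {φ : X → ℝ} (hφ : 0 ≤ φ) (hs : FiberSummable F ind φ) {y : Y}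
    (T : Finset X) (hT : ∀ z ∈ T, F z = y) :
    ∑ z ∈ T, (ind z : ℝ) * φ z ≤ transfer F ind φ y := by
  classical
  rw [← sum_subtype_of_mem (p := (· ∈ F ⁻¹' {y})) _ hT]
  exact (hs y).sum_le_tsum _ fun z _ => mul_nonneg (Nat.cast_nonneg _) (hφ z.1)

end Transfer

section Branches

variable {X Y : Type*} [TopologicalSpace X] [TopologicalSpace Y] {F : X → Y} {ind : X → ℕ}

theorem BranchedAt.exists_branches_mapsTo [DecidableEq X] {x : X} (hB : BranchedAt F ind x)
    {W : Set X} (hW : W ∈ 𝓝 x) :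
    ∃ V ∈ 𝓝 (F x), ∃ g : Fin (ind x) → Y → X,
      (∀ i, ContinuousAt (g i) (F x)) ∧ (∀ i, g i (F x) = x) ∧
      (∀ v ∈ V, ∀ i, g i v ∈ W ∧ F (g i v) = v) ∧
      ∀ v ∈ V, ∀ t : X → ℝ, ∑ i, t (g i v) = ∑ z ∈ univ.image (g · v), (ind z : ℝ) * t z := by
  obtain ⟨U, V, g, -, -, hV, hxV, hgU, hFg, hgx, hgc, -, hind⟩ := hB
  have hgc' : ∀ i, ContinuousAt (g i) (F x) := fun i => (hgc i).continuousAt (hV.mem_nhds hxV)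
  have hgW : ∀ i, g i ⁻¹' W ∈ 𝓝 (F x) := fun i => (hgc' i).preimage_mem_nhds (by rwa [hgx i])
  refine ⟨V ∩ ⋂ i, g i ⁻¹' W, inter_mem (hV.mem_nhds hxV) (iInter_mem.2 hgW), g, hgc', hgx,
    fun v hv i => ⟨Set.mem_iInter.1 hv.2 i, hFg i v hv.1⟩, fun v hv t => ?_⟩
  rw [sum_comp]
  refine sum_congr rfl fun z hz => ?_
  obtain ⟨i, -, rfl⟩ := mem_image.1 hz
  -- `g i v ∈ g j '' V ↔ g j v = g i v`, since `F ∘ g j = id` on `V`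
  have hcard : ind (g i v) = #{j | g j v = g i v} := by
    rw [hind _ (hgU i v hv.1), ← Fintype.card_subtype, ← Nat.card_eq_fintype_card]
    refine Nat.card_congr (Equiv.subtypeEquivRight fun j => ⟨?_, fun h => ⟨v, hv.1, h⟩⟩)
    rintro ⟨w, hw, hwv⟩
    obtain rfl : w = v := by rw [← hFg j w hw, hwv, hFg i v hv.1]
    exact hwv
  rw [hcard, nsmul_eq_mul]

end Branches

section Continuity

variable {X Y : Type*} [TopologicalSpace X] [T2Space X] [TopologicalSpace Y]
  {F : X → Y} {ind : X → ℕ}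

theorem eventually_lt_transfer (hF : ∀ x, BranchedAt F ind x) {φ : X → ℝ} (hφc : Continuous φ)
    (hφ0 : 0 ≤ φ) (hφs : FiberSummable F ind φ) {y₀ : Y} {s : Finset X}
    (hs : ∀ x ∈ s, F x = y₀) {b : ℝ} (hb : b < ∑ x ∈ s, (ind x : ℝ) * φ x) :
    ∀ᶠ y in 𝓝 y₀, b < transfer F ind φ y := by
  classical
  obtain ⟨W, hW, hWdisj⟩ := s.finite_toSet.t2_separation
  choose V hV g hgc hgx hgW hsum using
    fun x => (hF x).exists_branches_mapsTo ((hW x).2.mem_nhds (hW x).1)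
  have hlim : Tendsto (fun y => ∑ x ∈ s, ∑ i, φ (g x i y)) (𝓝 y₀)
      (𝓝 (∑ x ∈ s, (ind x : ℝ) * φ x)) := by
    refine tendsto_finsetSum _ fun x hx => ?_
    have hconst : ∑ i, φ (g x i (F x)) = (ind x : ℝ) * φ x := by simp [hgx]
    rw [← hs x hx, ← hconst]
    exact tendsto_finsetSum _ fun i _ => hφc.continuousAt.comp (hgc x i)
  have hVs : ⋂ x ∈ s, V x ∈ 𝓝 y₀ := (biInter_finset_mem s).2 fun x hx => hs x hx ▸ hV x
  filter_upwards [hlim.eventually (lt_mem_nhds hb), hVs] with y hby hy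
  have hyV : ∀ x ∈ s, y ∈ V x := Set.mem_iInter₂.1 hy
  have hdisj : (s : Set X).PairwiseDisjoint fun x => univ.image (g x · y) := by
    intro x hx x' hx' hne
    refine Finset.disjoint_left.2 fun z hz hz' => ?_
    obtain ⟨i, -, rfl⟩ := mem_image.1 hz
    obtain ⟨i', -, hi'⟩ := mem_image.1 hz'
    refine Set.disjoint_left.1 (hWdisj hx hx' hne) (hgW x y (hyV x hx) i).1 ?_
    exact hi' ▸ (hgW x' y (hyV x' hx') i').1
  refine hby.trans_le ?_
  rw [sum_congr rfl fun x hx => hsum x y (hyV x hx) φ, ← sum_biUnion hdisj]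
  refine sum_le_transfer hφ0 hφs _ fun z hz => ?_
  obtain ⟨x, hx, hz⟩ := mem_biUnion.1 hz
  obtain ⟨i, -, rfl⟩ := mem_image.1 hz
  exact (hgW x y (hyV x hx) i).2

theorem lowerSemicontinuous_transfer (hF : ∀ x, BranchedAt F ind x) {φ : X → ℝ}
    (hφc : Continuous φ) (hφ0 : 0 ≤ φ) (hφs : FiberSummable F ind φ) :
    LowerSemicontinuous (transfer F ind φ) := by
  intro y₀ b hb
  obtain ⟨s, hs⟩ := ((hφs y₀).hasSum.eventually (lt_mem_nhds hb)).exists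
  refine eventually_lt_transfer hF hφc hφ0 hφs (s := s.map (.subtype _)) ?_ ?_
  · simp +contextual
  · simpa using hs

theorem Continuous.upperSemicontinuous_sub {α : Type*} [TopologicalSpace α] {f g : α → ℝ}
    (hf : Continuous f) (hg : LowerSemicontinuous g) : UpperSemicontinuous (f - g) := by
  intro x b hb
  have hδ : 0 < (b - (f x - g x)) / 2 := by simp only [Pi.sub_apply] at hb; linarith
  filter_upwards [hf.continuousAt.eventually (gt_mem_nhds (lt_add_of_pos_right (f x) hδ)),
    hg x _ (sub_lt_self (g x) hδ)] with y hfy hgy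
  simp only [Pi.sub_apply]
  linarith

theorem continuous_transfer_of_le (hF : ∀ x, BranchedAt F ind x) {φ h : X → ℝ}
    (hφc : Continuous φ) (hhc : Continuous h) (hφ0 : 0 ≤ φ) (hφh : φ ≤ h)
    (hhs : FiberSummable F ind h) (hΦh : Continuous (transfer F ind h)) :
    Continuous (transfer F ind φ) := by
  have hφs : FiberSummable F ind φ := hhs.of_nonneg_of_le hφ0 hφh
  have hks : FiberSummable F ind (h - φ) := hhs.of_nonneg_of_le (sub_nonneg.2 hφh) (by simpa)
  have hsplit : transfer F ind φ = transfer F ind h - transfer F ind (h - φ) := by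
    ext y
    rw [Pi.sub_apply, eq_sub_iff_add_eq, ← transfer_add hφs hks, add_sub_cancel]
  refine continuous_iff_lower_upperSemicontinuous.2
    ⟨lowerSemicontinuous_transfer hF hφc hφ0 hφs, hsplit ▸ hΦh.upperSemicontinuous_sub ?_⟩
  exact lowerSemicontinuous_transfer hF (hhc.sub hφc) (sub_nonneg.2 hφh) hks

end Continuity

theorem summable_tsum_and_tsum_tsum_le_of_nonneg {ι κ : Type*} {f : ι → κ → ℝ} (hf0 : 0 ≤ f)
    (hfi : ∀ i, Summable (f i)) (hfk : ∀ k, Summable (f · k)) {c : κ → ℝ} (hc : Summable c)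
    (hle : ∀ k, ∑' i, f i k ≤ c k) :
    Summable (fun i => ∑' k, f i k) ∧ ∑' i, ∑' k, f i k ≤ ∑' k, c k := by
  have hfin : ∀ u : Finset ι, ∑ i ∈ u, ∑' k, f i k ≤ ∑' k, c k := fun u => by
    rw [← Summable.tsum_finsetSum fun i _ => hfi i]
    exact (summable_sum fun i _ => hfi i).tsum_le_tsum
      (fun k => ((hfk k).sum_le_tsum u fun i _ => hf0 i k).trans (hle k)) hc
  have hsum := summable_of_sum_le (fun i => tsum_nonneg (hf0 i)) hfin
  exact ⟨hsum, hsum.tsum_le_of_sum_le hfin⟩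

section Series

variable {X Y : Type*} {F : X → Y} {ind : X → ℕ}

theorem abs_transfer_sub_transfer_le {φ₁ φ₂ k : X → ℝ} (h₁ : FiberSummable F ind φ₁)
    (h₂ : FiberSummable F ind φ₂) (hk : FiberSummable F ind k) (hle : ∀ x, |φ₁ x - φ₂ x| ≤ k x)
    (y : Y) : |transfer F ind φ₁ y - transfer F ind φ₂ y| ≤ transfer F ind k y := by
  have hup := transfer_mono h₁ (h₂.add hk) (fun x => by
    simp only [Pi.add_apply]; linarith [le_abs_self (φ₁ x - φ₂ x), hle x]) y
  have hdown := transfer_mono h₂ (h₁.add hk) (fun x => by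
    simp only [Pi.add_apply]; linarith [neg_abs_le (φ₁ x - φ₂ x), hle x]) y
  rw [transfer_add h₂ hk] at hup
  rw [transfer_add h₁ hk] at hdown
  exact abs_sub_le_iff.2 ⟨by linarith, by linarith⟩

theorem fiberSummable_and_transfer_le_of_le_tsum {u : ℕ → X → ℝ} (hu0 : ∀ m, 0 ≤ u m)
    (hus : ∀ m, FiberSummable F ind (u m)) (hux : ∀ x, Summable (u · x)) {c : ℕ → ℝ}
    (hc : Summable c) (hbound : ∀ m y, transfer F ind (u m) y ≤ c m) {φ : X → ℝ} (hφ0 : 0 ≤ φ)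
    (hφ : ∀ x, φ x ≤ ∑' m, u m x) :
    FiberSummable F ind φ ∧ ∀ y, transfer F ind φ y ≤ ∑' m, c m := by
  have htsum : ∀ y, Summable (fun x : F ⁻¹' {y} => (ind x.1 : ℝ) * ∑' m, u m x.1) ∧
      transfer F ind (fun x => ∑' m, u m x) y ≤ ∑' m, c m := fun y => by
    simpa only [transfer, tsum_mul_left] using summable_tsum_and_tsum_tsum_le_of_nonneg
      (f := fun (x : F ⁻¹' {y}) m => (ind x.1 : ℝ) * u m x.1)
      (fun x m => mul_nonneg (Nat.cast_nonneg _) (hu0 m x.1)) (fun x => (hux x.1).mul_left _)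
      (fun m => hus m y) hc fun m => hbound m y
  have hts : FiberSummable F ind fun x => ∑' m, u m x := fun y => (htsum y).1
  have hs : FiberSummable F ind φ := hts.of_nonneg_of_le hφ0 hφ
  exact ⟨hs, fun y => (transfer_mono hs hts hφ y).trans (htsum y).2⟩

end Series

section MemC1

variable {X Y : Type*} [TopologicalSpace X] [TopologicalSpace Y] {F : X → Y} {ind : X → ℕ}

theorem MemC1.fiberSummable {f : X → ℂ} (h : MemC1 F ind f) :
    FiberSummable F ind fun x => ‖f x‖ :=
  h.2.2.1

theorem MemC1.zero : MemC1 F ind fun _ => 0 := by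
  have h0 : transferAbs F ind (fun _ => 0) = 0 := by ext; simp [transferAbs]
  exact ⟨continuous_const, tendsto_const_nhds, by simp, h0 ▸ continuous_const,
    h0 ▸ tendsto_const_nhds⟩

theorem MemC1.add [T2Space X] (hF : ∀ x, BranchedAt F ind x) {f₁ f₂ : X → ℂ}
    (h₁ : MemC1 F ind f₁) (h₂ : MemC1 F ind f₂) : MemC1 F ind fun x => f₁ x + f₂ x := by
  obtain ⟨hc₁, ht₁, hs₁, hΦc₁, hΦt₁⟩ := h₁
  obtain ⟨hc₂, ht₂, hs₂, hΦc₂, hΦt₂⟩ := h₂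
  have hle : (fun x => ‖f₁ x + f₂ x‖) ≤ (fun x => ‖f₁ x‖) + fun x => ‖f₂ x‖ :=
    fun x => norm_add_le _ _
  have hs : FiberSummable F ind ((fun x => ‖f₁ x‖) + fun x => ‖f₂ x‖) :=
    FiberSummable.add hs₁ hs₂
  have hs' : FiberSummable F ind fun x => ‖f₁ x + f₂ x‖ :=
    hs.of_nonneg_of_le (fun x => norm_nonneg _) hle
  have hΦ : transfer F ind ((fun x => ‖f₁ x‖) + fun x => ‖f₂ x‖)
      = transferAbs F ind f₁ + transferAbs F ind f₂ := funext (transfer_add hs₁ hs₂)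
  refine ⟨hc₁.add hc₂, by simpa using ht₁.add ht₂, hs', continuous_transfer_of_le hF
    (hc₁.add hc₂).norm (hc₁.norm.add hc₂.norm) (fun _ => norm_nonneg _) hle hs
    (hΦ ▸ hΦc₁.add hΦc₂), ?_⟩
  refine tendsto_of_tendsto_of_tendsto_of_le_of_le tendsto_const_nhds
    (by simpa using hΦt₁.add hΦt₂)
    (fun y => transfer_nonneg (φ := fun x => ‖f₁ x + f₂ x‖) (fun _ => norm_nonneg _) y) fun y => ?_
  exact (transfer_mono hs' hs hle y).trans_eq (congrFun hΦ y)

theorem MemC1.sum [T2Space X] (hF : ∀ x, BranchedAt F ind x) {ι : Type*} (s : Finset ι)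
    {f : ι → X → ℂ} (hf : ∀ i ∈ s, MemC1 F ind (f i)) :
    MemC1 F ind fun x => ∑ i ∈ s, f i x := by
  classical
  induction s using Finset.induction_on with
  | empty => simpa using MemC1.zero
  | insert a s ha ih =>
    simp_rw [sum_insert ha]
    exact (hf a (mem_insert_self a s)).add hF (ih fun i hi => hf i (mem_insert_of_mem hi))

theorem MemC1.of_transfer_sub_le (hind : ∀ x, 0 < ind x) {S : ℕ → X → ℂ} {g : X → ℂ}
    (hS : ∀ N, MemC1 F ind (S N)) {d : ℕ → ℝ} (hd : Tendsto d atTop (𝓝 0))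
    (hgS : ∀ N, FiberSummable F ind fun x => ‖g x - S N x‖)
    (hle : ∀ N y, transfer F ind (fun x => ‖g x - S N x‖) y ≤ d N) : MemC1 F ind g := by
  have hU : TendstoUniformly S g atTop := Metric.tendstoUniformly_iff.2 fun ε hε => by
    filter_upwards [hd.eventually (gt_mem_nhds hε)] with N hN x
    rw [dist_eq_norm]
    exact ((le_transfer_apply (fun _ => norm_nonneg _) (hind x) (hgS N)).trans
      (hle N (F x))).trans_lt hN
  have hgs : FiberSummable F ind fun x => ‖g x‖ :=
    ((hgS 0).add (hS 0).fiberSummable).of_nonneg_of_le (fun _ => norm_nonneg _)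
      fun x => norm_le_norm_sub_add (g x) (S 0 x)
  have hΦU : TendstoUniformly (fun N => transferAbs F ind (S N)) (transferAbs F ind g) atTop :=
    Metric.tendstoUniformly_iff.2 fun ε hε => by
      filter_upwards [hd.eventually (gt_mem_nhds hε)] with N hN y
      rw [Real.dist_eq]
      exact ((abs_transfer_sub_transfer_le hgs (hS N).fiberSummable (hgS N)
        (fun x => abs_norm_sub_norm_le _ _) y).trans (hle N y)).trans_lt hN
  exact ⟨hU.continuous (.of_forall fun N => (hS N).1),
    hU.tendsto_of_eventually_tendsto (.of_forall fun N => (hS N).2.1) tendsto_const_nhds, hgs,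
    hΦU.continuous (.of_forall fun N => (hS N).2.2.2.1),
    hΦU.tendsto_of_eventually_tendsto (.of_forall fun N => (hS N).2.2.2.2) tendsto_const_nhds⟩

end MemC1

theorem c1_complete_general {X Y : Type*}
    [TopologicalSpace X] [T2Space X]
    [TopologicalSpace Y]
    (F : X → Y) (ind : X → ℕ) (hF : IsBranched F ind)
    (ψ : ℕ → X → ℂ) (hψ : ∀ m, MemC1 F ind (ψ m))
    (c : ℕ → ℝ) (hc : Summable c)
    (hbound : ∀ m y, transferAbs F ind (ψ m) y ≤ c m) :
    ∃ g : X → ℂ,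
      TendstoUniformly (fun N x => ∑ m ∈ Finset.range N, ψ m x) g atTop ∧
      MemC1 F ind g := by
  have hψle : ∀ m x, ‖ψ m x‖ ≤ c m := fun m x =>
    (le_transfer_apply (fun _ => norm_nonneg _) (hF.2.1 x) (hψ m).fiberSummable).trans (hbound m _)
  have hψx : ∀ x, Summable fun m => ‖ψ m x‖ := fun x =>
    hc.of_nonneg_of_le (fun _ => norm_nonneg _) (hψle · x)
  have htail : ∀ N, (FiberSummable F ind fun x => ‖∑' m, ψ m x - ∑ m ∈ range N, ψ m x‖) ∧
      ∀ y, transfer F ind (fun x => ‖∑' m, ψ m x - ∑ m ∈ range N, ψ m x‖) y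
        ≤ ∑' m, c (m + N) := fun N =>
    fiberSummable_and_transfer_le_of_le_tsum (u := fun m x => ‖ψ (m + N) x‖)
      (fun _ _ => norm_nonneg _) (fun m => (hψ (m + N)).fiberSummable)
      (fun x => (summable_nat_add_iff N).2 (hψx x)) ((summable_nat_add_iff N).2 hc)
      (fun m => hbound (m + N)) (fun _ => norm_nonneg _) fun x => by
        rw [← (hψx x).of_norm.sum_add_tsum_nat_add N, add_sub_cancel_left]
        exact norm_tsum_le_tsum_norm ((summable_nat_add_iff N).2 (hψx x))
  exact ⟨_, tendstoUniformly_tsum_nat hc hψle, MemC1.of_transfer_sub_le hF.2.1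
    (fun N => MemC1.sum hF.2.2 _ fun m _ => hψ m) (tendsto_sum_nat_add c)
    (fun N => (htail N).1) fun N => (htail N).2⟩

/-- **Completeness of `C₁(X)` (Lemma 5.4 of the paper).** If `(ψ_m)` is a sequence in
`C₁(X)` with `∑_m ‖Φ(|ψ_m|)‖_∞ < ∞` (witnessed by a summable sequence of bounds `c m`),
then `∑_m ψ_m` converges uniformly on `X` to a function `g ∈ C₀(X)`, and `g ∈ C₁(X)`. -/
theorem c1_complete {X Y : Type*}
    [TopologicalSpace X] [T2Space X] [LocallyCompactSpace X]
    [TopologicalSpace Y] [T2Space Y] [LocallyCompactSpace Y]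
    (F : X → Y) (ind : X → ℕ) (hF : IsBranched F ind)
    (ψ : ℕ → X → ℂ) (hψ : ∀ m, MemC1 F ind (ψ m))
    (c : ℕ → ℝ) (hc : Summable c)
    (hbound : ∀ m y, transferAbs F ind (ψ m) y ≤ c m) :
    ∃ g : X → ℂ,
      TendstoUniformly (fun N x => ∑ m ∈ Finset.range N, ψ m x) g atTop ∧
      MemC1 F ind g :=
  c1_complete_general F ind hF ψ hψ c hc hbound
end

section
/- Let F̃ : ℂ → ℂ and G̃ : ℂ → ℂ be entire nonconstant functions. Let X ⊆ ℂ be a closed set with F̃⁻¹(X) = X and no isolated points, and let Y ⊆ ℂ be a closed set with G̃⁻¹(Y) = Y and no isolated points. Suppose φ : X → Y is a homeomorphism (for the subspace topologies) satisfying G̃(φ(x)) = φ(F̃(x)) for all x ∈ X. Then for every x ∈ X, ind_{G̃}(φ(x)) = ind_{F̃}(x); that is, a topological conjugacy of the restricted dynamical systems preserves the local index (order of vanishing). -/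
open Filter Topology

open scoped Classical in
/-- The order of vanishing of `z ↦ f z − f x` at `x`, for `f` analytic near `x`
(and junk value `0` otherwise).  For a holomorphic map this is the local index
`ind_f(x)`. -/
noncomputable def vanishingOrder (f : ℂ → ℂ) (x : ℂ) : ℕ∞ :=
  if h : AnalyticAt ℂ (fun z => f z - f x) x then analyticOrderAt (fun z => f z - f x) x else 0

/-!
Near `x₀`, an analytic `f` whose difference `f z - f x₀` vanishes to order `k` has the local
normal form `f = f x₀ + ψ ^ k` with `ψ` a local biholomorphism, `ψ x₀ = 0`. Hence `k` is read off
topologically: small neighbourhoods of `x₀` contain at most `k` preimages of any value, while every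
neighbourhood contains at least `k` preimages of each value `v ≠ f x₀` close to `f x₀`.
A conjugacy `φ` transports this count: choose `v ∈ X`, `v ≠ F x`, close to `F x` (possible since
`X` has no isolated points); its `k` preimages near `x` lie in `X` by total invariance, and `φ`
sends them injectively to preimages of `φ v` under `G` near `φ x`. So `ind_F x ≤ ind_G (φ x)`,
and `φ⁻¹` gives the reverse inequality.
-/

open Set

theorem setOf_pow_eq_eq_toFinset_nthRoots {R : Type*} [CommRing R] [IsDomain R] [DecidableEq R]
    {k : ℕ} (hk : k ≠ 0) (a : R) :
    {s : R | s ^ k = a} = (Polynomial.nthRoots k a).toFinset := by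
  ext s
  simp [Polynomial.mem_nthRoots (Nat.pos_of_ne_zero hk)]

theorem encard_setOf_pow_eq_le {R : Type*} [CommRing R] [IsDomain R] {k : ℕ} (hk : k ≠ 0)
    (a : R) : {s : R | s ^ k = a}.encard ≤ k := by
  classical
  rw [setOf_pow_eq_eq_toFinset_nthRoots hk, encard_coe_eq_coe_finsetCard]
  exact_mod_cast (Multiset.toFinset_card_le _).trans (Polynomial.card_nthRoots k a)

theorem Complex.encard_setOf_pow_eq {k : ℕ} (hk : k ≠ 0) {a : ℂ} (ha : a ≠ 0) :
    {s : ℂ | s ^ k = a}.encard = k := by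
  classical
  have hζ := Complex.isPrimitiveRoot_exp k hk
  rw [setOf_pow_eq_eq_toFinset_nthRoots hk, encard_coe_eq_coe_finsetCard,
    Multiset.toFinset_card_of_nodup (hζ.nthRoots_nodup ha), hζ.card_nthRoots,
    if_pos ⟨_, Complex.cpow_nat_inv_pow a hk⟩]

theorem AnalyticAt.exists_pow_eq {g : ℂ → ℂ} {x₀ : ℂ} (hg : AnalyticAt ℂ g x₀) (hg₀ : g x₀ ≠ 0)
    {k : ℕ} (hk : k ≠ 0) : ∃ h : ℂ → ℂ, AnalyticAt ℂ h x₀ ∧ h x₀ ≠ 0 ∧ ∀ z, h z ^ k = g z := by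
  set c := g x₀ ^ (k⁻¹ : ℂ)
  have hc : c ^ k = g x₀ := Complex.cpow_nat_inv_pow _ hk
  -- `g z / g x₀` is near `1`, where the principal `k`-th root is analytic
  refine ⟨fun z => c * (g z / g x₀) ^ (k⁻¹ : ℂ), ?_, ?_, fun z => ?_⟩
  · exact analyticAt_const.mul
      ((hg.div analyticAt_const hg₀).cpow analyticAt_const (by simp [hg₀]))
  · simp [c, hg₀]
  · rw [mul_pow, hc, Complex.cpow_nat_inv_pow _ hk, mul_div_cancel₀ _ hg₀]

theorem AnalyticAt.exists_openPartialHomeomorph_sub_eq_pow {f : ℂ → ℂ} {x₀ : ℂ} {k : ℕ}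
    (hf : AnalyticAt ℂ f x₀) (hk : analyticOrderAt (fun z => f z - f x₀) x₀ = k) :
    ∃ e : OpenPartialHomeomorph ℂ ℂ, x₀ ∈ e.source ∧ e x₀ = 0 ∧
      ∀ᶠ z in 𝓝 x₀, f z - f x₀ = e z ^ k := by
  obtain ⟨g, hg, hg₀, hfg⟩ := (hf.sub analyticAt_const).analyticOrderAt_eq_natCast.1 hk
  have hk₀ : k ≠ 0 := by
    rintro rfl
    simpa [eq_comm, hg₀] using hfg.self_of_nhds
  obtain ⟨h, hh, hh₀, hhg⟩ := hg.exists_pow_eq hg₀ hk₀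
  have hψ : HasStrictDerivAt (fun z => (z - x₀) * h z) (h x₀) x₀ := by
    simpa using ((hasStrictDerivAt_id x₀).fun_sub (hasStrictDerivAt_const x₀ x₀)).fun_mul
      hh.hasStrictDerivAt
  let e := (hψ.hasStrictFDerivAt_equiv hh₀).toOpenPartialHomeomorph _
  refine ⟨e, HasStrictFDerivAt.mem_toOpenPartialHomeomorph_source _, by simp [e], ?_⟩
  filter_upwards [hfg] with z hz
  simpa [e, mul_pow, hhg] using hz

namespace OpenPartialHomeomorph

variable {α : Type*} [TopologicalSpace α] {f : α → ℂ} {x₀ : α} {k : ℕ}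
  (e : OpenPartialHomeomorph α ℂ)

theorem exists_mem_nhds_encard_inter_preimage_le (hx₀ : x₀ ∈ e.source)
    (he : ∀ᶠ z in 𝓝 x₀, f z - f x₀ = e z ^ k) :
    ∃ V ∈ 𝓝 x₀, ∀ w, (V ∩ f ⁻¹' {w}).encard ≤ k := by
  have hk : k ≠ 0 := by
    rintro rfl
    simpa using he.self_of_nhds
  refine ⟨e.source ∩ {z | f z - f x₀ = e z ^ k}, inter_mem (e.open_source.mem_nhds hx₀) he,
    fun w => ?_⟩
  calc _ ≤ {s : ℂ | s ^ k = w - f x₀}.encard := by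
        refine encard_le_encard_of_injOn (fun z ⟨⟨_, hz⟩, hzw⟩ => ?_)
          (e.injOn.mono fun z hz => hz.1.1)
        rw [mem_ofPred_eq, ← hz, show f z = w from hzw]
    _ ≤ k := encard_setOf_pow_eq_le hk _

theorem eventually_le_encard_inter_preimage (hx₀ : x₀ ∈ e.source) (he₀ : e x₀ = 0)
    (he : ∀ᶠ z in 𝓝 x₀, f z - f x₀ = e z ^ k) {U : Set α} (hU : U ∈ 𝓝 x₀) :
    ∀ᶠ v in 𝓝[≠] f x₀, (k : ℕ∞) ≤ (U ∩ f ⁻¹' {v}).encard := by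
  have hk : k ≠ 0 := by
    rintro rfl
    simpa using he.self_of_nhds
  have himage := e.image_mem_nhds hx₀ (inter_mem hU he)
  rw [he₀] at himage
  obtain ⟨r, hr, hball⟩ := Metric.mem_nhds_iff.1 himage
  filter_upwards [nhdsWithin_le_nhds (Metric.ball_mem_nhds (f x₀) (pow_pos hr k)),
    self_mem_nhdsWithin] with v hv hne
  have hroots : {s : ℂ | s ^ k = v - f x₀} ⊆ e '' (U ∩ f ⁻¹' {v}) := by
    intro s hs
    have hsr : ‖s‖ < r := by
      refine lt_of_pow_lt_pow_left₀ k hr.le ?_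
      rw [← norm_pow, hs.out, ← dist_eq_norm]
      exact hv
    obtain ⟨z, ⟨hzU, hz⟩, rfl⟩ := hball (by simpa using hsr)
    exact ⟨z, ⟨hzU, by simpa [hs.out] using hz⟩, rfl⟩
  calc (k : ℕ∞) = {s : ℂ | s ^ k = v - f x₀}.encard :=
        (Complex.encard_setOf_pow_eq hk (sub_ne_zero.2 hne)).symm
    _ ≤ (e '' (U ∩ f ⁻¹' {v})).encard := encard_le_encard hroots
    _ ≤ _ := encard_image_le _ _

end OpenPartialHomeomorph

theorem AnalyticAt.vanishingOrder_eq {f : ℂ → ℂ} {x : ℂ} (hf : AnalyticAt ℂ f x) :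
    vanishingOrder f x = analyticOrderAt (fun z => f z - f x) x :=
  dif_pos (hf.sub analyticAt_const)

theorem Differentiable.vanishingOrder_ne_top {f : ℂ → ℂ} (hf : Differentiable ℂ f)
    (hnc : ∃ a b : ℂ, f a ≠ f b) (x : ℂ) : vanishingOrder f x ≠ ⊤ := by
  obtain ⟨a, b, hab⟩ := hnc
  rw [(hf.analyticAt x).vanishingOrder_eq, Ne,
    AnalyticOnNhd.analyticOrderAt_eq_top_iff_eq_zero x fun z => (hf.sub_const (f x)).analyticAt z]
  intro h
  have ha := congrFun h a
  have hb := congrFun h b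
  simp only [Pi.zero_apply, sub_eq_zero] at ha hb
  exact hab (ha.trans hb.symm)

theorem AnalyticAt.exists_mem_nhds_encard_inter_preimage_le {f : ℂ → ℂ} {x₀ : ℂ}
    (hf : AnalyticAt ℂ f x₀) :
    ∃ V ∈ 𝓝 x₀, ∀ w, (V ∩ f ⁻¹' {w}).encard ≤ vanishingOrder f x₀ := by
  rw [hf.vanishingOrder_eq]
  by_cases htop : analyticOrderAt (fun z => f z - f x₀) x₀ = ⊤
  · exact ⟨univ, univ_mem, fun _ => htop ▸ le_top⟩
  obtain ⟨k, hk⟩ := ENat.ne_top_iff_exists.1 htop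
  obtain ⟨e, hx₀, -, he⟩ := hf.exists_openPartialHomeomorph_sub_eq_pow hk.symm
  rw [← hk]
  exact e.exists_mem_nhds_encard_inter_preimage_le hx₀ he

theorem AnalyticAt.eventually_vanishingOrder_le_encard_inter_preimage {f : ℂ → ℂ} {x₀ : ℂ}
    (hf : AnalyticAt ℂ f x₀) (htop : vanishingOrder f x₀ ≠ ⊤) {U : Set ℂ} (hU : U ∈ 𝓝 x₀) :
    ∀ᶠ v in 𝓝[≠] f x₀, vanishingOrder f x₀ ≤ (U ∩ f ⁻¹' {v}).encard := by
  obtain ⟨k, hk⟩ := ENat.ne_top_iff_exists.1 htop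
  obtain ⟨e, hx₀, he₀, he⟩ :=
    hf.exists_openPartialHomeomorph_sub_eq_pow (hk.trans hf.vanishingOrder_eq).symm
  rw [← hk]
  exact e.eventually_le_encard_inter_preimage hx₀ he₀ he hU

theorem le_of_semiconj_of_encard_inter_preimage {α β : Type*} [TopologicalSpace α]
    [TopologicalSpace β] {f : α → α} {g : β → β} {X : Set α} {Y : Set β} (hX : f ⁻¹' X = X)
    (φ : X → Y) (hφ : Function.Injective φ)
    (hconj : ∀ x x' : X, (x' : α) = f x → g (φ x) = φ x') {x : X}
    (hφx : ContinuousAt φ x) (hperf : f x ∈ closure (X \ {f x})) {k l : ℕ∞}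
    (hf : ∀ U ∈ 𝓝 (x : α), ∀ᶠ v in 𝓝[≠] f x, k ≤ (U ∩ f ⁻¹' {v}).encard)
    (hg : ∃ V ∈ 𝓝 (φ x : β), ∀ w, (V ∩ g ⁻¹' {w}).encard ≤ l) : k ≤ l := by
  obtain ⟨V, hV, hVl⟩ := hg
  obtain ⟨U, hU, hUV⟩ := (mem_nhds_subtype X x _).1
    ((continuous_subtype_val.continuousAt.comp hφx).preimage_mem_nhds hV)
  have : (𝓝[X \ {f x}] f x).NeBot := mem_closure_iff_nhdsWithin_neBot.1 hperf
  obtain ⟨v, hvk, hvX, -⟩ :=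
    (((hf U hU).filter_mono (nhdsWithin_mono _ (sdiff_subset_compl X _))).and
      self_mem_nhdsWithin).exists
  have hSX : U ∩ f ⁻¹' {v} ⊆ X := fun s hs => by
    rw [← hX, mem_preimage, hs.2]
    exact hvX
  calc k ≤ (U ∩ f ⁻¹' {v}).encard := hvk
    _ = (Subtype.val ⁻¹' (U ∩ f ⁻¹' {v}) : Set X).encard :=
      (encard_preimage_of_injective_subset_range Subtype.val_injective
        (by rwa [Subtype.range_coe])).symm
    _ ≤ (V ∩ g ⁻¹' {(φ ⟨v, hvX⟩ : β)}).encard :=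
      encard_le_encard_of_injOn (fun s hs => ⟨hUV hs.1, hconj s _ hs.2.symm⟩)
        (Subtype.val_injective.comp hφ).injOn
    _ ≤ l := hVl _

theorem vanishingOrder_le_of_semiconj {f g : ℂ → ℂ} (hf : Differentiable ℂ f)
    (hnc : ∃ a b : ℂ, f a ≠ f b) (hg : Differentiable ℂ g) {X Y : Set ℂ} (hX : f ⁻¹' X = X)
    (φ : X → Y) (hφ : Function.Injective φ)
    (hconj : ∀ x x' : X, (x' : ℂ) = f x → g (φ x) = φ x') {x : X}
    (hφx : ContinuousAt φ x) (hperf : f x ∈ closure (X \ {f x})) :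
    vanishingOrder f x ≤ vanishingOrder g (φ x) :=
  le_of_semiconj_of_encard_inter_preimage hX φ hφ hconj hφx hperf
    (fun _ => (hf.analyticAt _).eventually_vanishingOrder_le_encard_inter_preimage
      (hf.vanishingOrder_ne_top hnc _))
    (hg.analyticAt _).exists_mem_nhds_encard_inter_preimage_le

theorem conjugacy_preserves_vanishingOrder_general (Ft Gt : ℂ → ℂ)
    (hFd : Differentiable ℂ Ft) (hFnc : ∃ a b : ℂ, Ft a ≠ Ft b)
    (hGd : Differentiable ℂ Gt) (hGnc : ∃ a b : ℂ, Gt a ≠ Gt b)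
    (X : Set ℂ) (hXinv : Ft ⁻¹' X = X)
    (hXperf : ∀ p ∈ X, p ∈ closure (X \ {p}))
    (Y : Set ℂ) (hYinv : Gt ⁻¹' Y = Y)
    (hYperf : ∀ p ∈ Y, p ∈ closure (Y \ {p}))
    (φ : X ≃ₜ Y)
    (hconj : ∀ x x' : X, (x' : ℂ) = Ft x.1 → Gt (φ x).1 = (φ x').1) :
    ∀ x : X, vanishingOrder Gt (φ x).1 = vanishingOrder Ft x.1 := by
  have hconj_symm : ∀ y y' : Y, (y' : ℂ) = Gt y.1 → Ft (φ.symm y).1 = (φ.symm y').1 := by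
    intro y y' hy'
    have hx := hconj (φ.symm y) ⟨_, hXinv.symm.subset (φ.symm y).2⟩ rfl
    rw [φ.apply_symm_apply, ← hy'] at hx
    rw [Subtype.ext hx, φ.symm_apply_apply]
  intro x
  apply le_antisymm
  · have h := vanishingOrder_le_of_semiconj hGd hGnc hFd hYinv φ.symm φ.symm.injective
      hconj_symm φ.symm.continuous.continuousAt (hYperf _ (hYinv.symm.subset (φ x).2))
    rwa [φ.symm_apply_apply] at h
  · exact vanishingOrder_le_of_semiconj hFd hFnc hGd hXinv φ φ.injective
      hconj φ.continuous.continuousAt (hXperf _ (hXinv.symm.subset x.2))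

/-- **Conjugacy invariance of the index (Corollary 7.3 of the paper).** Let `F̃`, `G̃` be
entire nonconstant functions, `X` a totally invariant (`F̃⁻¹(X) = X`) closed set with no
isolated points, and `Y` likewise for `G̃`.  If `φ : X ≃ₜ Y` satisfies
`G̃(φ(x)) = φ(F̃(x))` for all `x ∈ X`, then `ind_{G̃}(φ(x)) = ind_{F̃}(x)` for all
`x ∈ X`; i.e. a topological conjugacy preserves the order of vanishing. -/
theorem conjugacy_preserves_vanishingOrder (Ft Gt : ℂ → ℂ)
    (hFd : Differentiable ℂ Ft) (hFnc : ∃ a b : ℂ, Ft a ≠ Ft b)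
    (hGd : Differentiable ℂ Gt) (hGnc : ∃ a b : ℂ, Gt a ≠ Gt b)
    (X : Set ℂ) (hX : IsClosed X) (hXinv : Ft ⁻¹' X = X)
    (hXperf : ∀ p ∈ X, p ∈ closure (X \ {p}))
    (Y : Set ℂ) (hY : IsClosed Y) (hYinv : Gt ⁻¹' Y = Y)
    (hYperf : ∀ p ∈ Y, p ∈ closure (Y \ {p}))
    (φ : X ≃ₜ Y)
    (hconj : ∀ x x' : X, (x' : ℂ) = Ft x.1 → Gt (φ x).1 = (φ x').1) :
    ∀ x : X, vanishingOrder Gt (φ x).1 = vanishingOrder Ft x.1 :=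
  conjugacy_preserves_vanishingOrder_general Ft Gt hFd hFnc hGd hGnc X hXinv hXperf Y hYinv hYperf φ
    hconj
end

section
/- Let X be a set and σ : X → X a map such that every point of X is eventually periodic: for each x ∈ X there exist k ≥ 0 and n ≥ 1 with σ^{k+n}(x) = σ^{k}(x). Let η : ℤ[X] → ℤ[X] be the group homomorphism determined by η(δ_x) = δ_x − δ_{σ(x)}. For each cycle P of σ choose a point x_P ∈ P. Then the composition of the inclusion of the subgroup generated by {δ_{x_P} : P a cycle of σ} into ℤ[X] with the quotient map ℤ[X] → ℤ[X]/im(η) is a group isomorphism onto the cokernel of η; equivalently, the classes of the elements δ_{x_P} form a ℤ-basis of coker η. -/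
/-- `P` is a cycle (periodic orbit) of `σ`: the forward orbit of a periodic point. -/
def IsCycle {X : Type*} (σ : X → X) (P : Finset X) : Prop :=
  ∃ p ∈ P, (∃ n : ℕ, 0 < n ∧ σ^[n] p = p) ∧ ∀ x : X, x ∈ P ↔ ∃ k : ℕ, σ^[k] p = x

/-!
Send each point to the cycle it eventually falls into. This map `r` satisfies `r ∘ σ = r`, so
`ℤ[r] : ℤ[X] → ℤ[cycles]` kills `im η` and descends to `coker η`. Telescoping shows
`δ_x ≡ δ_{σ^k x}` modulo `im η`, so every `δ_x` is congruent to `δ_{x_P}` for the cycle `P`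
that `x` enters; hence `δ_P ↦ [δ_{x_P}]` is inverse to the descended map.
-/

open Function Finsupp

namespace IsCycle

variable {X : Type*} {σ : X → X} {P Q : Finset X}

theorem iterate_mem (hP : IsCycle σ P) {y : X} (hy : y ∈ P) (m : ℕ) : σ^[m] y ∈ P := by
  obtain ⟨p, -, -, hmem⟩ := hP
  obtain ⟨a, rfl⟩ := (hmem y).1 hy
  exact (hmem _).2 ⟨m + a, iterate_add_apply σ m a p⟩

theorem exists_iterate_eq (hP : IsCycle σ P) {y z : X} (hy : y ∈ P) (hz : z ∈ P) :
    ∃ j, σ^[j] y = z := by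
  obtain ⟨p, -, ⟨n, hn0, hn⟩, hmem⟩ := hP
  obtain ⟨a, rfl⟩ := (hmem y).1 hy
  obtain ⟨b, rfl⟩ := (hmem z).1 hz
  -- `σ^[n * a - a]` takes `σ^[a] p` to `σ^[n * a] p = p`
  refine ⟨b + (n * a - a), ?_⟩
  rw [iterate_add_apply, ← iterate_add_apply σ (n * a - a),
    Nat.sub_add_cancel (Nat.le_mul_of_pos_left a hn0), (IsPeriodicPt.mul_const hn a).eq]

theorem eq_of_mem (hP : IsCycle σ P) (hQ : IsCycle σ Q) {y : X} (hyP : y ∈ P)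
    (hyQ : y ∈ Q) : P = Q := by
  have subset {P Q : Finset X} (hP : IsCycle σ P) (hQ : IsCycle σ Q) (hyP : y ∈ P)
      (hyQ : y ∈ Q) : P ⊆ Q := fun x hx ↦ by
    obtain ⟨j, rfl⟩ := hP.exists_iterate_eq hyP hx
    exact hQ.iterate_mem hyQ j
  exact (subset hP hQ hyP hyQ).antisymm (subset hQ hP hyQ hyP)

theorem eq_of_iterate_mem (hP : IsCycle σ P) (hQ : IsCycle σ Q) {x : X} {k l : ℕ}
    (hk : σ^[k] x ∈ P) (hl : σ^[l] x ∈ Q) : P = Q := by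
  refine hP.eq_of_mem hQ (y := σ^[k + l] x) ?_ ?_
  · rw [add_comm, iterate_add_apply]; exact hP.iterate_mem hk l
  · rw [iterate_add_apply]; exact hQ.iterate_mem hl k

end IsCycle

theorem isCycle_image_range_iterate {X : Type*} [DecidableEq X] {σ : X → X} {n : ℕ} {p : X}
    (hn : 0 < n) (hp : IsPeriodicPt σ n p) :
    IsCycle σ ((Finset.range n).image fun j ↦ σ^[j] p) := by
  refine ⟨p, Finset.mem_image.2 ⟨0, Finset.mem_range.2 hn, rfl⟩, ⟨n, hn, hp⟩, fun x ↦ ?_⟩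
  simp only [Finset.mem_image, Finset.mem_range]
  refine ⟨fun ⟨j, _, hj⟩ ↦ ⟨j, hj⟩, fun ⟨k, hk⟩ ↦ ⟨k % n, Nat.mod_lt k hn, ?_⟩⟩
  rw [hp.iterate_mod_apply, hk]

theorem exists_isCycle_iterate_mem {X : Type*} {σ : X → X} {x : X}
    (hx : ∃ k n : ℕ, 0 < n ∧ σ^[k + n] x = σ^[k] x) :
    ∃ P, IsCycle σ P ∧ ∃ k, σ^[k] x ∈ P := by
  classical
  obtain ⟨k, n, hn, hkn⟩ := hx
  have hper : IsPeriodicPt σ n (σ^[k] x) := by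
    rw [IsPeriodicPt, IsFixedPt, ← iterate_add_apply, add_comm, hkn]
  exact ⟨_, isCycle_image_range_iterate hn hper, k,
    Finset.mem_image.2 ⟨0, Finset.mem_range.2 hn, rfl⟩⟩

section Cokernel

variable {R X ι : Type*} [Ring R] {σ : X → X} {η : (X →₀ R) →ₗ[R] (X →₀ R)}

theorem single_sub_single_iterate_mem_range
    (hη : ∀ x, η (single x 1) = single x 1 - single (σ x) 1) (x : X) :
    ∀ k : ℕ, single x (1 : R) - single (σ^[k] x) 1 ∈ LinearMap.range η
  | 0 => by simp
  | k + 1 => by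
    have telescope : single x (1 : R) - single (σ^[k + 1] x) 1 =
        (single x 1 - single (σ^[k] x) 1) + η (single (σ^[k] x) 1) := by
      rw [hη, iterate_succ_apply']; abel
    rw [telescope]
    exact add_mem (single_sub_single_iterate_mem_range hη x k) (LinearMap.mem_range_self η _)

theorem lmapDomain_comp_eq_zero
    (hη : ∀ x, η (single x 1) = single x 1 - single (σ x) 1) {r : X → ι}
    (hr : ∀ x, r (σ x) = r x) : lmapDomain R R r ∘ₗ η = 0 := by
  refine lhom_ext' fun x ↦ LinearMap.ext_ring ?_
  simp [hη, mapDomain_sub, hr]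

variable (hη : ∀ x, η (single x 1) = single x 1 - single (σ x) 1) {r : X → ι} {s : ι → X}
  (hr : ∀ x, r (σ x) = r x) (hrs : ∀ i, r (s i) = i) (hreach : ∀ x, ∃ k, σ^[k] x = s (r x))

noncomputable def cokerEquiv : ((X →₀ R) ⧸ LinearMap.range η) ≃ₗ[R] (ι →₀ R) :=
  LinearEquiv.ofLinearMap
    ((LinearMap.range η).liftQ (lmapDomain R R r) (LinearMap.range_le_ker_iff.2
      (lmapDomain_comp_eq_zero hη hr)))
    ((LinearMap.range η).mkQ ∘ₗ lmapDomain R R s)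
    (by
      refine lhom_ext' fun i ↦ LinearMap.ext_ring ?_
      simp [hrs])
    (by
      refine Submodule.linearMap_qext _ (lhom_ext' fun x ↦ LinearMap.ext_ring ?_)
      obtain ⟨k, hk⟩ := hreach x
      simpa [Submodule.Quotient.eq, ← hk] using
        neg_mem (single_sub_single_iterate_mem_range hη x k))

noncomputable def cokerBasis : Module.Basis ι R ((X →₀ R) ⧸ LinearMap.range η) :=
  .ofRepr (cokerEquiv hη hr hrs hreach)

theorem cokerBasis_apply (i : ι) :
    cokerBasis hη hr hrs hreach i = Submodule.Quotient.mk (single (s i) 1) := by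
  simp [cokerBasis, cokerEquiv]

end Cokernel

/-- **Cokernel computation (cf. Corollary 8.4 of the paper).** Let `σ : X → X` be a map
all of whose points are eventually periodic, and let `η : ℤ[X] → ℤ[X]` be the
(ℤ-linear) homomorphism determined by `η(δ_x) = δ_x − δ_{σ(x)}`.  For each cycle `P`
of `σ` choose `x_P ∈ P`.  Then the classes of the elements `δ_{x_P}` in
`ℤ[X]/im(η)` form a ℤ-basis of the cokernel of `η`: they are ℤ-linearly independent
and they span. -/
theorem coker_eta_basis {X : Type*} (σ : X → X)
    (hep : ∀ x : X, ∃ k n : ℕ, 0 < n ∧ σ^[k + n] x = σ^[k] x)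
    (η : (X →₀ ℤ) →ₗ[ℤ] (X →₀ ℤ))
    (hη : ∀ x : X, η (Finsupp.single x 1) =
      Finsupp.single x 1 - Finsupp.single (σ x) 1)
    (c : {P : Finset X // IsCycle σ P} → X) (hc : ∀ P, c P ∈ P.1) :
    LinearIndependent ℤ (fun P : {P : Finset X // IsCycle σ P} =>
      Submodule.Quotient.mk (p := LinearMap.range η) (Finsupp.single (c P) (1 : ℤ))) ∧
    Submodule.span ℤ (Set.range fun P : {P : Finset X // IsCycle σ P} =>
      Submodule.Quotient.mk (p := LinearMap.range η)
        (Finsupp.single (c P) (1 : ℤ))) = ⊤ := by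
  choose cyc hcyc k hk using fun x ↦ exists_isCycle_iterate_mem (hep x)
  let r (x : X) : {P : Finset X // IsCycle σ P} := ⟨cyc x, hcyc x⟩
  have hr (x : X) : r (σ x) = r x := by
    have hk' : σ^[k (σ x) + 1] x ∈ cyc (σ x) := by
      rw [iterate_succ_apply]; exact hk (σ x)
    exact Subtype.ext ((hcyc (σ x)).eq_of_iterate_mem (hcyc x) hk' (hk x))
  have hrc (P : {P : Finset X // IsCycle σ P}) : r (c P) = P :=
    Subtype.ext ((hcyc (c P)).eq_of_iterate_mem P.2 (hk (c P)) (l := 0) (hc P))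
  have hreach (x : X) : ∃ j, σ^[j] x = c (r x) := by
    obtain ⟨j, hj⟩ := (hcyc x).exists_iterate_eq (hk x) (hc (r x))
    exact ⟨j + k x, by rw [iterate_add_apply, hj]⟩
  let b := cokerBasis hη hr hrc hreach
  have hb : ⇑b = fun P ↦ Submodule.Quotient.mk (single (c P) 1) :=
    funext (cokerBasis_apply hη hr hrc hreach)
  exact hb ▸ ⟨b.linearIndependent, b.span_eq⟩
end
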